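/- The binary Boolean implication relation R = { (0,0), (0,1), (1,1) } ⊆ Bool² (i.e., { (x₁,x₂) | x₁ → x₂ }) is a weak base of the co-clone it generates (this co-clone is IM in Post's lattice): for every finite set Δ of Boolean relations with Pol(Δ) = Pol({R}) one has pPol(Δ) ⊆ pPol({R}). -/

import Mathlib

/-- A Boolean relation of arity `k`: a set of `k`-tuples over `Bool`. -/
abbrev BRel (k : ℕ) := Set (Fin k → Bool)

/-- A total `m`-ary Boolean operation `f` preserves a `k`-ary relation `R`. -/
def Preserves {m k : ℕ} (f : (Fin m → Bool) → Bool) (R : BRel k) : Prop :=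
  ∀ ts : Fin m → Fin k → Bool, (∀ j, ts j ∈ R) → (fun i => f (fun j => ts j i)) ∈ R

/-- A partial `m`-ary Boolean operation (modelled with `Option Bool`; `none` =
undefined) preserves a `k`-ary relation `R`. -/
def PPreserves {m k : ℕ} (f : (Fin m → Bool) → Option Bool) (R : BRel k) : Prop :=
  ∀ ts : Fin m → Fin k → Bool, (∀ j, ts j ∈ R) →
    ∀ u : Fin k → Bool, (∀ i, f (fun j => ts j i) = some (u i)) → u ∈ R

/-- The set of all (finitary, total) polymorphisms of a set of relations. -/
def Pol (Γ : Set (Σ k, BRel k)) : Set (Σ m, (Fin m → Bool) → Bool) :=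
  { f | ∀ R ∈ Γ, Preserves f.2 R.2 }

/-- The set of all partial polymorphisms of a set of relations. -/
def pPol (Γ : Set (Σ k, BRel k)) : Set (Σ m, (Fin m → Bool) → Option Bool) :=
  { f | ∀ R ∈ Γ, PPreserves f.2 R.2 }

/-- `R` is a weak base of the co-clone it generates: every finite `Δ` with the
same polymorphisms as `R` satisfies `pPol Δ ⊆ pPol {R}`. -/
def IsWeakBase {k : ℕ} (R : BRel k) : Prop :=
  ∀ Δ : Set (Σ k, BRel k), Δ.Finite →
    Pol Δ = Pol {⟨k, R⟩} → pPol Δ ⊆ pPol {⟨k, R⟩}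

/-!
Every relation `S` of `Δ` contains both constant tuples (the constants are nullary polymorphisms of
`x₀ → x₁`), and some `S ∈ Δ` has a tuple `v` whose complement `¬v` is not in `S` (negation is not a
polymorphism of `x₀ → x₁`). If a partial polymorphism `f` of `Δ` mapped two columns of implication
pairs to `(1, 0)`, substituting these columns into `v` coordinatewise gives tuples of `S` that are
constant or equal to `v`, and `f` maps them to `¬v ∉ S`.
-/

def implRel : BRel 2 := {t | t 0 = true → t 1 = true}

lemma mem_Pol_singleton_iff {k : ℕ} (R : BRel k) (f : Σ m, (Fin m → Bool) → Bool) :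
    f ∈ Pol {⟨k, R⟩} ↔ Preserves f.2 R := by
  simp [Pol]

lemma mem_pPol_singleton_iff {k : ℕ} (R : BRel k) (f : Σ m, (Fin m → Bool) → Option Bool) :
    f ∈ pPol {⟨k, R⟩} ↔ PPreserves f.2 R := by
  simp [pPol]

lemma preserves_const_iff {k : ℕ} (c : Bool) (R : BRel k) :
    Preserves (m := 0) (fun _ => c) R ↔ (fun _ => c) ∈ R :=
  ⟨fun h => h Fin.elim0 (fun j => j.elim0), fun h _ _ => h⟩

lemma const_mem_of_Pol_eq {k : ℕ} {R : BRel k} {Δ : Set (Σ k, BRel k)}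
    (hPol : Pol Δ = Pol {⟨k, R⟩}) {c : Bool} (hc : (fun _ => c) ∈ R) :
    ∀ S ∈ Δ, (fun _ => c) ∈ S.2 := by
  have hmem : (⟨0, fun _ => c⟩ : Σ m, (Fin m → Bool) → Bool) ∈ Pol Δ := by
    rw [hPol, mem_Pol_singleton_iff]
    exact (preserves_const_iff c R).2 hc
  exact fun S hS => (preserves_const_iff c S.2).1 (hmem S hS)

lemma exists_not_mem_not_of_Pol_eq {k : ℕ} {R : BRel k} {Δ : Set (Σ k, BRel k)}
    (hPol : Pol Δ = Pol {⟨k, R⟩}) (hR : ¬ Preserves (m := 1) (fun x => !x 0) R) :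
    ∃ S ∈ Δ, ∃ v ∈ S.2, (fun i => !v i) ∉ S.2 := by
  by_contra! hclosed
  have hmem : (⟨1, fun x => !x 0⟩ : Σ m, (Fin m → Bool) → Bool) ∈ Pol Δ :=
    fun S hS ts hts => hclosed S hS (ts 0) (hts 0)
  rw [hPol, mem_Pol_singleton_iff] at hmem
  exact hR hmem

lemma const_mem_implRel (c : Bool) : (fun _ => c) ∈ implRel := id

lemma not_preserves_not_implRel : ¬ Preserves (m := 1) (fun x => !x 0) implRel := by
  intro h
  have hneg := h (fun _ => ![false, true]) (fun _ h0 => by simp at h0)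
  simp [implRel] at hneg

lemma PPreserves.cond_mem {m k : ℕ} {f : (Fin m → Bool) → Option Bool} {S : BRel k}
    (hf : PPreserves f S) (hS₀ : (fun _ => false) ∈ S) (hS₁ : (fun _ => true) ∈ S)
    {v : Fin k → Bool} (hv : v ∈ S) {a b : Fin m → Bool} (hab : ∀ j, a j = true → b j = true)
    {x y : Bool} (ha : f a = some x) (hb : f b = some y) :
    (fun i => cond (v i) y x) ∈ S := by
  refine hf (fun j i => cond (v i) (b j) (a j)) (fun j => ?_) _ (fun i => ?_)
  · have hj := hab j
    cases hA : a j <;> cases hB : b j <;> simp_all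
  · cases v i <;> assumption

theorem stmt12 :
    IsWeakBase { t : Fin 2 → Bool | t 0 = true → t 1 = true } := by
  intro Δ _ hPol f hf
  obtain ⟨S, hS, v, hv, hnv⟩ := exists_not_mem_not_of_Pol_eq hPol not_preserves_not_implRel
  rw [mem_pPol_singleton_iff]
  intro ts hts u hu hu₀
  by_contra hu₁
  rw [Bool.not_eq_true] at hu₁
  apply hnv
  have hsubst := (hf S hS).cond_mem (const_mem_of_Pol_eq hPol (const_mem_implRel false) S hS)
    (const_mem_of_Pol_eq hPol (const_mem_implRel true) S hS) hv hts
    ((hu 0).trans (congrArg some hu₀)) ((hu 1).trans (congrArg some hu₁))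
  simpa using hsubst
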